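/- arXiv:2207.11122 — 5 statements merged into one kernel-verified Lean document; each statement's English description precedes it below -/
import Mathlib

section
/- Let T be a finite index set and let μ_j ≥ 0 and b_j ≥ 0 be real numbers for each j ∈ T. If Σ_{j∈T} μ_j + √(Σ_{j∈T} b_j) > 1 (i.e., T is infeasible for unit capacity), then Σ_{j∈T} (μ_j + b_j) > 3/4. -/
open Finset

theorem sub_quarter_lt_add_of_lt_add_sqrt {c m B : ℝ} (hB : 0 ≤ B) (h : c < m + √B) :
    c - 1 / 4 < m + B :=
  calc c - 1 / 4 ≤ c - √B + B := by nlinarith [sq_nonneg (√B - 1 / 2), Real.sq_sqrt hB]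
    _ < m + B := by linarith

theorem infeasible_set_sum_gt_general (ι : Type*) (T : Finset ι) (μ b : ι → ℝ)
    (hb : ∀ j ∈ T, 0 ≤ b j)
    (hinf : (∑ j ∈ T, μ j) + Real.sqrt (∑ j ∈ T, b j) > 1) :
    (∑ j ∈ T, (μ j + b j)) > 3 / 4 := by
  rw [sum_add_distrib]
  linarith [sub_quarter_lt_add_of_lt_add_sqrt (sum_nonneg hb) hinf]

/-- If a finite item set `T` with nonnegative mean usages `μ` and nonnegative
uncertainties `b` is infeasible for unit capacity, i.e.,
`Σ_{j∈T} μ j + √(Σ_{j∈T} b j) > 1`, then `Σ_{j∈T} (μ j + b j) > 3/4`. -/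
theorem infeasible_set_sum_gt (ι : Type*) (T : Finset ι) (μ b : ι → ℝ)
    (hμ : ∀ j ∈ T, 0 ≤ μ j) (hb : ∀ j ∈ T, 0 ≤ b j)
    (hinf : (∑ j ∈ T, μ j) + Real.sqrt (∑ j ∈ T, b j) > 1) :
    (∑ j ∈ T, (μ j + b j)) > 3 / 4 :=
  infeasible_set_sum_gt_general ι T μ b hb hinf
end

section
/- Let J be a finite set of items with mean usages μ_j ≥ 0 and uncertainties b_j ≥ 0, partitioned into N pairwise disjoint bins S_1, …, S_N with N ≥ 2. Suppose that for every pair of distinct indices i ≠ i₀ the union S_i ∪ S_{i₀} is infeasible for unit capacity, i.e., Σ_{j ∈ S_i ∪ S_{i₀}} μ_j + √(Σ_{j ∈ S_i ∪ S_{i₀}} b_j) > 1. Then (3/8)·N < Σ_{j∈J} (μ_j + b_j). -/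
/-!
For two distinct bins the union has mean load `s` and uncertainty `t ≥ 0` with `s + √t > 1`;
since `t - √t ≥ -1/4`, the two bins together carry `μ + b`-mass more than `3/4`.
Summing this over all ordered pairs of distinct bins counts every bin `2 (N - 1)` times,
so `2 (N - 1) · Σ (μ + b) > N (N - 1) · 3/4`.
-/

open Finset

theorem three_quarters_lt_add_of_one_lt_add_sqrt {s t : ℝ} (ht : 0 ≤ t) (h : 1 < s + √t) :
    3 / 4 < s + t := by
  nlinarith [sq_nonneg (√t - 1 / 2), Real.sq_sqrt ht]

theorem Finset.sum_sum_erase_add {α R : Type*} [CommRing R] [DecidableEq α] (s : Finset α)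
    (f : α → R) :
    ∑ i ∈ s, ∑ j ∈ s.erase i, (f i + f j) = 2 * (#s - 1) * ∑ i ∈ s, f i := by
  have inner (i) (hi : i ∈ s) :
      ∑ j ∈ s.erase i, (f i + f j) = (#s - 2) * f i + ∑ j ∈ s, f j := by
    rw [sum_add_distrib, sum_const, card_erase_of_mem hi, nsmul_eq_mul,
      Nat.cast_pred (card_pos.mpr ⟨i, hi⟩), sum_erase_eq_sub hi]
    ring
  rw [sum_congr rfl inner, sum_add_distrib, ← mul_sum, sum_const, nsmul_eq_mul]
  ring

theorem Finset.mul_card_lt_two_mul_sum_of_lt_add {α R : Type*} [CommRing R] [LinearOrder R]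
    [IsStrictOrderedRing R] {s : Finset α} {f : α → R} {c : R} (hs : 2 ≤ #s)
    (h : ∀ i ∈ s, ∀ j ∈ s, i ≠ j → c < f i + f j) :
    c * #s < 2 * ∑ i ∈ s, f i := by
  classical
  have hs' : (2 : R) ≤ #s := by exact_mod_cast hs
  have hpairs : ∑ i ∈ s, ∑ _j ∈ s.erase i, c < ∑ i ∈ s, ∑ j ∈ s.erase i, (f i + f j) := by
    refine sum_lt_sum_of_nonempty (card_pos.mp (by omega)) fun i hi => ?_
    refine sum_lt_sum_of_nonempty ?_ fun j hj =>
      h i hi j (mem_of_mem_erase hj) (ne_of_mem_erase hj).symm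
    exact card_pos.mp (by rw [card_erase_of_mem hi]; omega)
  rw [sum_congr rfl fun i hi => by rw [sum_const, card_erase_of_mem hi], sum_const,
    sum_sum_erase_add, nsmul_eq_mul, nsmul_eq_mul, Nat.cast_pred (by omega)] at hpairs
  exact lt_of_mul_lt_mul_left (a := (#s : R) - 1) (by linarith) (by linarith)

theorem pairwise_infeasible_lower_bound_general (ι : Type*) [DecidableEq ι] (N : ℕ) (hN : 2 ≤ N)
    (J : Finset ι) (S : Fin N → Finset ι)
    (hdisj : ∀ i i₀ : Fin N, i ≠ i₀ → Disjoint (S i) (S i₀))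
    (hcover : Finset.univ.biUnion S = J)
    (μ b : ι → ℝ) (hb : ∀ j ∈ J, 0 ≤ b j)
    (hinf : ∀ i i₀ : Fin N, i ≠ i₀ →
      (∑ j ∈ S i ∪ S i₀, μ j) + Real.sqrt (∑ j ∈ S i ∪ S i₀, b j) > 1) :
    (3 / 8 : ℝ) * N < ∑ j ∈ J, (μ j + b j) := by
  have hpair (i i₀ : Fin N) (hne : i ≠ i₀) :
      3 / 4 < ∑ j ∈ S i, (μ j + b j) + ∑ j ∈ S i₀, (μ j + b j) := by
    have hb' : 0 ≤ ∑ j ∈ S i ∪ S i₀, b j := sum_nonneg fun j hj =>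
      hb j (hcover ▸ union_subset (subset_biUnion_of_mem S (mem_univ i))
        (subset_biUnion_of_mem S (mem_univ i₀)) hj)
    have := three_quarters_lt_add_of_one_lt_add_sqrt hb' (hinf i i₀ hne)
    rwa [← sum_union (hdisj i i₀ hne), sum_add_distrib]
  have hsplit : ∑ j ∈ J, (μ j + b j) = ∑ i, ∑ j ∈ S i, (μ j + b j) :=
    hcover ▸ sum_biUnion fun i _ i₀ _ hne => hdisj i i₀ hne
  have := mul_card_lt_two_mul_sum_of_lt_add (s := univ) (c := 3 / 4)
    (by rwa [card_univ, Fintype.card_fin]) fun i _ i₀ _ hne => hpair i i₀ hne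
  rw [card_univ, Fintype.card_fin] at this
  linarith

/-- If a finite item set `J` with nonnegative means `μ` and nonnegative uncertainties `b`
is partitioned into `N ≥ 2` pairwise disjoint bins such that the union of any two distinct
bins is infeasible for unit capacity, then `(3/8)·N < Σ_{j∈J} (μ j + b j)`. -/
theorem pairwise_infeasible_lower_bound (ι : Type*) [DecidableEq ι] (N : ℕ) (hN : 2 ≤ N)
    (J : Finset ι) (S : Fin N → Finset ι)
    (hdisj : ∀ i i₀ : Fin N, i ≠ i₀ → Disjoint (S i) (S i₀))
    (hcover : Finset.univ.biUnion S = J)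
    (μ b : ι → ℝ) (hμ : ∀ j ∈ J, 0 ≤ μ j) (hb : ∀ j ∈ J, 0 ≤ b j)
    (hinf : ∀ i i₀ : Fin N, i ≠ i₀ →
      (∑ j ∈ S i ∪ S i₀, μ j) + Real.sqrt (∑ j ∈ S i ∪ S i₀, b j) > 1) :
    (3 / 8 : ℝ) * N < ∑ j ∈ J, (μ j + b j) :=
  pairwise_infeasible_lower_bound_general ι N hN J S hdisj hcover μ b hb hinf
end

section
/- Let J be a nonempty finite set of items with mean usages μ_j ≥ 0 and uncertainties b_j ≥ 0. Suppose J is partitioned into N nonempty pairwise disjoint bins S_1, …, S_N such that every bin is feasible for unit capacity (Σ_{j∈S_i} μ_j + √(Σ_{j∈S_i} b_j) ≤ 1) and every union of two distinct bins is infeasible for unit capacity (Σ_{j∈S_i∪S_{i₀}} μ_j + √(Σ_{j∈S_i∪S_{i₀}} b_j) > 1 for all i ≠ i₀). Suppose also that J admits another partition into N* pairwise disjoint bins each of which is feasible for unit capacity. Then N < (8/3)·N*. -/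
open Finset

/-!
Give a bin `T` the weight `∑_{j ∈ T} (μ j + b j)`. Since `√s ≤ s + 1/4`, an infeasible set has
weight above `3/4`, so any two bins of the first packing weigh more than `3/4` together and its
`N` bins weigh more than `3N/8` in total. Since `s ≤ √s` when `√s ≤ 1`, a feasible bin weighs at
most `1`, so the total weight of `J` is at most `N*`.
-/

section Feasibility

variable {ι : Type*} {μ b : ι → ℝ} {T : Finset ι}

lemma sum_add_le_one_of_add_sqrt_le_one (hμ : ∀ j ∈ T, 0 ≤ μ j) (hb : ∀ j ∈ T, 0 ≤ b j)
    (h : ∑ j ∈ T, μ j + √(∑ j ∈ T, b j) ≤ 1) : ∑ j ∈ T, (μ j + b j) ≤ 1 := by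
  have hμT : 0 ≤ ∑ j ∈ T, μ j := sum_nonneg hμ
  have hbT : 0 ≤ ∑ j ∈ T, b j := sum_nonneg hb
  have hsqrt_le_one : √(∑ j ∈ T, b j) ≤ 1 := by linarith
  have hsq := Real.sq_sqrt hbT
  rw [sum_add_distrib]
  nlinarith [Real.sqrt_nonneg (∑ j ∈ T, b j)]

lemma three_quarters_lt_sum_add_of_one_lt_add_sqrt (hb : ∀ j ∈ T, 0 ≤ b j)
    (h : 1 < ∑ j ∈ T, μ j + √(∑ j ∈ T, b j)) : 3 / 4 < ∑ j ∈ T, (μ j + b j) := by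
  have hsq := Real.sq_sqrt (sum_nonneg hb)
  rw [sum_add_distrib]
  nlinarith [sq_nonneg (√(∑ j ∈ T, b j) - 1 / 2)]

end Feasibility

/-- Pair each index with its successor under the cyclic rotation, which has no fixed points. -/
lemma mul_lt_two_mul_sum_of_pairwise_lt_add {n : ℕ} (hn : 2 ≤ n) {w : Fin n → ℝ} {c : ℝ}
    (h : ∀ i k, i ≠ k → c < w i + w k) : c * n < 2 * ∑ i, w i := by
  have hrot : ∀ i, finRotate n i ≠ i := fun i =>
    Equiv.Perm.mem_support.1 (by simp [support_finRotate_of_le hn])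
  have : Nonempty (Fin n) := ⟨⟨0, by omega⟩⟩
  calc c * n = ∑ _i : Fin n, c := by simp [mul_comm]
    _ < ∑ i, (w i + w (finRotate n i)) :=
      sum_lt_sum_of_nonempty univ_nonempty fun i _ => h i _ (hrot i).symm
    _ = 2 * ∑ i, w i := by rw [sum_add_distrib, Equiv.sum_comp, two_mul]

theorem ucac_machines_bound_general (ι : Type*) [DecidableEq ι]
    (J : Finset ι) (hJ : J.Nonempty)
    (μ b : ι → ℝ) (hμ : ∀ j ∈ J, 0 ≤ μ j) (hb : ∀ j ∈ J, 0 ≤ b j)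
    (N : ℕ) (S : Fin N → Finset ι)
    (hdisj : ∀ i i₀ : Fin N, i ≠ i₀ → Disjoint (S i) (S i₀))
    (hcover : Finset.univ.biUnion S = J)
    (hinf : ∀ i i₀ : Fin N, i ≠ i₀ →
      (∑ j ∈ S i ∪ S i₀, μ j) + Real.sqrt (∑ j ∈ S i ∪ S i₀, b j) > 1)
    (Nstar : ℕ) (Sstar : Fin Nstar → Finset ι)
    (hdisj' : ∀ i i₀ : Fin Nstar, i ≠ i₀ → Disjoint (Sstar i) (Sstar i₀))
    (hcover' : Finset.univ.biUnion Sstar = J)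
    (hfeas' : ∀ i : Fin Nstar,
      (∑ j ∈ Sstar i, μ j) + Real.sqrt (∑ j ∈ Sstar i, b j) ≤ 1) :
    (N : ℝ) < (8 / 3) * Nstar := by
  have hsub : ∀ i, S i ⊆ J := fun i => hcover ▸ subset_biUnion_of_mem S (mem_univ i)
  have hsub' : ∀ i, Sstar i ⊆ J := fun i => hcover' ▸ subset_biUnion_of_mem Sstar (mem_univ i)
  have htotal : ∑ i, ∑ j ∈ S i, (μ j + b j) ≤ Nstar :=
    calc ∑ i, ∑ j ∈ S i, (μ j + b j) = ∑ j ∈ J, (μ j + b j) := by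
          rw [← hcover, sum_biUnion fun i _ k _ => hdisj i k]
      _ = ∑ i, ∑ j ∈ Sstar i, (μ j + b j) := by
          rw [← hcover', sum_biUnion fun i _ k _ => hdisj' i k]
      _ ≤ ∑ _i : Fin Nstar, 1 := sum_le_sum fun i _ =>
          sum_add_le_one_of_add_sqrt_le_one (fun j hj => hμ j (hsub' i hj))
            (fun j hj => hb j (hsub' i hj)) (hfeas' i)
      _ = Nstar := by simp
  rcases le_or_gt N 1 with hN | hN
  · obtain ⟨j, hj⟩ := hJ
    rw [← hcover', mem_biUnion] at hj
    obtain ⟨i, -, -⟩ := hj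
    have : (1 : ℝ) ≤ Nstar := by exact_mod_cast i.pos
    have : (N : ℝ) ≤ 1 := by exact_mod_cast hN
    linarith
  · have hpair := mul_lt_two_mul_sum_of_pairwise_lt_add hN (c := 3 / 4)
      (w := fun i => ∑ j ∈ S i, (μ j + b j)) fun i k hik => by
        rw [← sum_union (hdisj i k hik)]
        exact three_quarters_lt_sum_add_of_one_lt_add_sqrt
          (fun j hj => hb j (union_subset (hsub i) (hsub k) hj)) (hinf i k hik)
    linarith

/-- Theorem 5 (combinatorial core): let a nonempty finite item set `J` with nonnegative
means `μ` and nonnegative uncertainties `b` be partitioned into `N` nonempty pairwise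
disjoint bins, each feasible for unit capacity, such that the union of any two distinct
bins is infeasible. If `J` also admits a partition into `N*` pairwise disjoint bins each
feasible for unit capacity, then `N < (8/3)·N*`. -/
theorem ucac_machines_bound (ι : Type*) [DecidableEq ι]
    (J : Finset ι) (hJ : J.Nonempty)
    (μ b : ι → ℝ) (hμ : ∀ j ∈ J, 0 ≤ μ j) (hb : ∀ j ∈ J, 0 ≤ b j)
    (N : ℕ) (S : Fin N → Finset ι)
    (hSne : ∀ i : Fin N, (S i).Nonempty)
    (hdisj : ∀ i i₀ : Fin N, i ≠ i₀ → Disjoint (S i) (S i₀))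
    (hcover : Finset.univ.biUnion S = J)
    (hfeas : ∀ i : Fin N, (∑ j ∈ S i, μ j) + Real.sqrt (∑ j ∈ S i, b j) ≤ 1)
    (hinf : ∀ i i₀ : Fin N, i ≠ i₀ →
      (∑ j ∈ S i ∪ S i₀, μ j) + Real.sqrt (∑ j ∈ S i ∪ S i₀, b j) > 1)
    (Nstar : ℕ) (Sstar : Fin Nstar → Finset ι)
    (hdisj' : ∀ i i₀ : Fin Nstar, i ≠ i₀ → Disjoint (Sstar i) (Sstar i₀))
    (hcover' : Finset.univ.biUnion Sstar = J)
    (hfeas' : ∀ i : Fin Nstar,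
      (∑ j ∈ Sstar i, μ j) + Real.sqrt (∑ j ∈ Sstar i, b j) ≤ 1) :
    (N : ℝ) < (8 / 3) * Nstar :=
  ucac_machines_bound_general ι J hJ μ b hμ hb N S hdisj hcover hinf Nstar Sstar hdisj' hcover'
    hfeas'
end

section
/- Let J be a finite set of items with mean usages μ_j ∈ ℝ and strictly positive uncertainties b_j > 0, let V be a capacity and D > 0. Call a partition P of J (into finitely many pairwise disjoint bins covering J) feasible if every bin S of P satisfies Σ_{j∈S} μ_j + D·√(Σ_{j∈S} b_j) ≤ V, and let its total UCaC be Σ_{S∈P} U(S) with U(S) = Σ_{j∈S} μ_j + D·√(Σ_{j∈S} b_j). If a feasible partition P minimizes total UCaC among all feasible partitions of J, then for any two distinct nonempty bins S, S' of P, the merged set is infeasible: Σ_{j∈S∪S'} μ_j + D·√(Σ_{j∈S∪S'} b_j) > V. -/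
/-! Merging two bins of a partition is again a partition, and it strictly lowers the total UCaC,
because `√` is strictly subadditive on positive reals: `√(x + y) < √x + √y`. So if the merged bin
were feasible, the merged partition would be a cheaper feasible partition. -/

open Finset

variable {ι : Type*} [DecidableEq ι]

/-- The UCaC of a bin `S`: `Σ_{j∈S} μ j + D·√(Σ_{j∈S} b j)`. -/
noncomputable def binUCaC (D : ℝ) (μ b : ι → ℝ) (S : Finset ι) : ℝ :=
  (∑ j ∈ S, μ j) + D * Real.sqrt (∑ j ∈ S, b j)

/-- `P` is a partition of `J` into pairwise disjoint bins covering `J`. -/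
def IsBinPartition (J : Finset ι) (P : Finset (Finset ι)) : Prop :=
  (∀ S ∈ P, ∀ S' ∈ P, S ≠ S' → Disjoint S S') ∧ P.sup id = J

/-- `P` is a feasible partition of `J` for capacity `V`: it is a partition and every
bin satisfies the capacity constraint. -/
noncomputable def IsFeasiblePartition (J : Finset ι) (V D : ℝ) (μ b : ι → ℝ)
    (P : Finset (Finset ι)) : Prop :=
  IsBinPartition J P ∧ ∀ S ∈ P, binUCaC D μ b S ≤ V

/-- The total UCaC of a partition. -/
noncomputable def totalUCaC (D : ℝ) (μ b : ι → ℝ) (P : Finset (Finset ι)) : ℝ :=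
  ∑ S ∈ P, binUCaC D μ b S

theorem Real.sqrt_add_lt_sqrt_add_sqrt {x y : ℝ} (hx : 0 < x) (hy : 0 < y) :
    √(x + y) < √x + √y := by
  rw [Real.sqrt_lt' (by positivity)]
  nlinarith [Real.sq_sqrt hx.le, Real.sq_sqrt hy.le, Real.sqrt_pos.2 hx, Real.sqrt_pos.2 hy]

theorem binUCaC_union_lt {D : ℝ} (hD : 0 < D) (μ : ι → ℝ) {b : ι → ℝ} {S S' : Finset ι}
    (hSS' : Disjoint S S') (hbS : 0 < ∑ j ∈ S, b j) (hbS' : 0 < ∑ j ∈ S', b j) :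
    binUCaC D μ b (S ∪ S') < binUCaC D μ b S + binUCaC D μ b S' := by
  have hsqrt := Real.sqrt_add_lt_sqrt_add_sqrt hbS hbS'
  unfold binUCaC
  rw [sum_union hSS', sum_union hSS']
  nlinarith

def mergeBins (P : Finset (Finset ι)) (S S' : Finset ι) : Finset (Finset ι) :=
  insert (S ∪ S') (P \ {S, S'})

theorem union_notMem_sdiff_pair {P : Finset (Finset ι)}
    (hdisj : ∀ S ∈ P, ∀ S' ∈ P, S ≠ S' → Disjoint S S') {S S' : Finset ι} (hS : S ∈ P)
    (hSne : S.Nonempty) : S ∪ S' ∉ P \ {S, S'} := by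
  intro h
  obtain ⟨hmem, hne⟩ := mem_sdiff.1 h
  have hself : Disjoint S (S ∪ S') :=
    hdisj S hS _ hmem fun heq => hne (heq ▸ mem_insert_self _ _)
  exact hSne.ne_empty (disjoint_self.1 (hself.mono_right subset_union_left))

theorem IsBinPartition.mergeBins {J : Finset ι} {P : Finset (Finset ι)} (hP : IsBinPartition J P)
    {S S' : Finset ι} (hS : S ∈ P) (hS' : S' ∈ P) : IsBinPartition J (mergeBins P S S') := by
  obtain ⟨hdisj, hsup⟩ := hP
  have hdisj_union : ∀ T ∈ P \ {S, S'}, Disjoint (S ∪ S') T := by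
    intro T hT
    obtain ⟨hTP, hTSS'⟩ := mem_sdiff.1 hT
    simp only [mem_insert, mem_singleton, not_or] at hTSS'
    exact disjoint_union_left.2
      ⟨hdisj S hS T hTP (Ne.symm hTSS'.1), hdisj S' hS' T hTP (Ne.symm hTSS'.2)⟩
  refine ⟨?_, ?_⟩
  · intro T hT T' hT' hTT'
    rcases mem_insert.1 hT with rfl | hT <;> rcases mem_insert.1 hT' with rfl | hT'
    · exact absurd rfl hTT'
    · exact hdisj_union T' hT'
    · exact (hdisj_union T hT).symm
    · exact hdisj T (mem_sdiff.1 hT).1 T' (mem_sdiff.1 hT').1 hTT'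
  · have hpair : ({S, S'} : Finset (Finset ι)) ⊆ P := insert_subset hS (singleton_subset_iff.2 hS')
    conv_rhs => rw [← hsup, ← sdiff_union_of_subset hpair]
    rw [_root_.mergeBins, sup_insert, sup_union, sup_insert, sup_singleton]
    exact sup_comm _ _

theorem totalUCaC_mergeBins_add {D : ℝ} {μ b : ι → ℝ} {P : Finset (Finset ι)}
    (hdisj : ∀ S ∈ P, ∀ S' ∈ P, S ≠ S' → Disjoint S S') {S S' : Finset ι} (hS : S ∈ P)
    (hS' : S' ∈ P) (hne : S ≠ S') (hSne : S.Nonempty) :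
    totalUCaC D μ b (mergeBins P S S') + (binUCaC D μ b S + binUCaC D μ b S') =
      totalUCaC D μ b P + binUCaC D μ b (S ∪ S') := by
  have hpair : ({S, S'} : Finset (Finset ι)) ⊆ P := insert_subset hS (singleton_subset_iff.2 hS')
  unfold totalUCaC mergeBins
  rw [sum_insert (union_notMem_sdiff_pair hdisj hS hSne), ← sum_pair hne,
    ← sum_sdiff hpair]
  ring

/-- If a feasible partition `P` of `J` minimizes total UCaC among all feasible partitions,
then for any two distinct nonempty bins `S, S'` of `P`, the merged set `S ∪ S'` is
infeasible: `Σ_{j∈S∪S'} μ j + D·√(Σ_{j∈S∪S'} b j) > V`. -/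
theorem optimal_partition_merge_infeasible
    (J : Finset ι) (μ b : ι → ℝ) (hb : ∀ j, 0 < b j) (V D : ℝ) (hD : 0 < D)
    (P : Finset (Finset ι)) (hP : IsFeasiblePartition J V D μ b P)
    (hopt : ∀ Q : Finset (Finset ι), IsFeasiblePartition J V D μ b Q →
      totalUCaC D μ b P ≤ totalUCaC D μ b Q)
    (S S' : Finset ι) (hS : S ∈ P) (hS' : S' ∈ P) (hne : S ≠ S')
    (hSne : S.Nonempty) (hS'ne : S'.Nonempty) :
    (∑ j ∈ S ∪ S', μ j) + D * Real.sqrt (∑ j ∈ S ∪ S', b j) > V := by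
  by_contra! hV
  have hmerged : IsFeasiblePartition J V D μ b (mergeBins P S S') := by
    refine ⟨hP.1.mergeBins hS hS', fun T hT => ?_⟩
    rcases mem_insert.1 hT with rfl | hT
    · exact hV
    · exact hP.2 T (mem_sdiff.1 hT).1
  have hcheaper := binUCaC_union_lt hD μ (hP.1.1 S hS S' hS' hne)
    (sum_pos (fun j _ => hb j) hSne) (sum_pos (fun j _ => hb j) hS'ne)
  have hsplit := totalUCaC_mergeBins_add (D := D) (μ := μ) (b := b) hP.1.1 hS hS' hne hSne
  linarith [hopt _ hmerged]
end

section
/- Consider the relaxed stochastic bin packing problem on empty machines: fix N, K ∈ ℕ, capacity V > 0, coefficient D > 0, means μ ∈ ℝ^K with μ_j ≥ 0, uncertainties b ∈ ℝ^K with b_j > 0 for all j, and demands m ∈ ℝ^K with m_j ≥ 0. If x* is feasible and minimizes UCaC(x) over all feasible allocations x, then for every feasible allocation x, the number of machines used by x* is at most the number of machines used by x; that is, minimizing UCaC leads to the least number of used machines. -/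
/-!
Every feasible allocation `x` has `UCaC(x) ≤ V · #used(x)`, because unused machines cost nothing.
Conversely, in a UCaC-minimizer at most one used machine has slack: if two used machines `i`, `k`
were below capacity, with `Σ_j x_{ij} b_j ≤ Σ_j x_{kj} b_j`, moving a small amount of some job
from `i` to `k` would keep the allocation feasible and, by strict concavity of `√`, lower the UCaC.
The one exceptional machine still has positive usage, so `UCaC(x*) > V · (#used(x*) - 1)`, and
comparing the two bounds gives `#used(x*) ≤ #used(x)`.
-/

open Finset

/-- Resource usage `g_i(x) = Σ_j x_{ij} μ_j + D·√(Σ_j x_{ij} b_j)` of machine `i`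
under the (relaxed, real-valued) allocation `x`. -/
noncomputable def machineUsage {N K : ℕ} (D : ℝ) (μ b : Fin K → ℝ)
    (x : Fin N → Fin K → ℝ) (i : Fin N) : ℝ :=
  (∑ j, x i j * μ j) + D * Real.sqrt (∑ j, x i j * b j)

/-- Feasibility of a relaxed allocation `x` on empty machines: nonnegative entries,
per-machine capacity constraint, and all demands satisfied. -/
noncomputable def FeasibleAlloc {N K : ℕ} (V D : ℝ) (μ b m : Fin K → ℝ)
    (x : Fin N → Fin K → ℝ) : Prop :=
  (∀ i j, 0 ≤ x i j) ∧ (∀ i, machineUsage D μ b x i ≤ V) ∧ (∀ j, ∑ i, x i j = m j)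

/-- The cluster UCaC of an allocation: the sum of machine usages. -/
noncomputable def clusterUCaC {N K : ℕ} (D : ℝ) (μ b : Fin K → ℝ)
    (x : Fin N → Fin K → ℝ) : ℝ :=
  ∑ i, machineUsage D μ b x i

/-- The number of machines used by an allocation `x`: machines with some nonzero entry. -/
noncomputable def usedMachines {N K : ℕ} (x : Fin N → Fin K → ℝ) : ℕ :=
  {i : Fin N | ∃ j, x i j ≠ 0}.ncard

open Filter Topology

theorem Real.sqrt_sub_add_sqrt_add_lt {a c t : ℝ} (ht : 0 < t) (hta : t ≤ a) (hac : a ≤ c) :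
    √(a - t) + √(c + t) < √a + √c := by
  have hpq : √(a - t) < √a := Real.sqrt_lt_sqrt (by linarith) (by linarith)
  have hqr : √a ≤ √c := Real.sqrt_le_sqrt hac
  have hrs : √c < √(c + t) := Real.sqrt_lt_sqrt (by linarith) (by linarith)
  have hsq : √(a - t) ^ 2 + √(c + t) ^ 2 = √a ^ 2 + √c ^ 2 := by
    rw [Real.sq_sqrt (by linarith), Real.sq_sqrt (by linarith), Real.sq_sqrt (by linarith),
      Real.sq_sqrt (by linarith)]
    ring
  -- the outer roots are further apart and have the same sum of squares, hence a smaller product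
  have hprod : √(a - t) * √(c + t) < √a * √c := by
    nlinarith [mul_lt_mul'' (by linarith : √c - √a < √(c + t) - √(a - t))
      (by linarith : √c - √a < √(c + t) - √(a - t)) (by linarith) (by linarith)]
  exact lt_of_pow_lt_pow_left₀ 2 (by positivity) (by nlinarith)

namespace RelaxedSBPP

section RowUsage

variable {ι : Type*} [Fintype ι] {D : ℝ} {μ b : ι → ℝ}

noncomputable def rowUsage (D : ℝ) (μ b r : ι → ℝ) : ℝ :=
  r ⬝ᵥ μ + D * √(r ⬝ᵥ b)

theorem machineUsage_eq_rowUsage {N K : ℕ} (D : ℝ) (μ b : Fin K → ℝ) (x : Fin N → Fin K → ℝ)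
    (i : Fin N) : machineUsage D μ b x i = rowUsage D μ b (x i) :=
  rfl

@[simp]
theorem rowUsage_zero : rowUsage D μ b 0 = 0 := by
  simp [rowUsage]

theorem rowUsage_mono (hD : 0 ≤ D) (hμ : 0 ≤ μ) (hb : 0 ≤ b) : Monotone (rowUsage D μ b) :=
  fun _ _ hrs => add_le_add (dotProduct_le_dotProduct_of_nonneg_right hrs hμ)
    (mul_le_mul_of_nonneg_left
      (Real.sqrt_le_sqrt (dotProduct_le_dotProduct_of_nonneg_right hrs hb)) hD)

theorem rowUsage_pos (hD : 0 < D) (hμ : 0 ≤ μ) (hb : ∀ j, 0 < b j) {r : ι → ℝ} (hr : 0 ≤ r)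
    (hr0 : r ≠ 0) : 0 < rowUsage D μ b r := by
  obtain ⟨j, hj⟩ := Function.ne_iff.1 hr0
  have hrb : 0 < r ⬝ᵥ b :=
    sum_pos' (fun q _ => mul_nonneg (hr q) (hb q).le)
      ⟨j, mem_univ j, mul_pos ((hr j).lt_of_ne' hj) (hb j)⟩
  exact add_pos_of_nonneg_of_pos (dotProduct_nonneg_of_nonneg hr hμ)
    (mul_pos hD (Real.sqrt_pos.2 hrb))

theorem continuous_rowUsage : Continuous (rowUsage D μ b) := by
  unfold rowUsage
  fun_prop

theorem rowUsage_sub_single_add_rowUsage_add_single_lt [DecidableEq ι] (hD : 0 < D)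
    (hb : 0 ≤ b) {r s : ι → ℝ} (hr : 0 ≤ r) (hrs : r ⬝ᵥ b ≤ s ⬝ᵥ b) {j : ι} (hbj : 0 < b j)
    {ε : ℝ} (hε : 0 < ε) (hεr : ε ≤ r j) :
    rowUsage D μ b (r - Pi.single j ε) + rowUsage D μ b (s + Pi.single j ε) <
      rowUsage D μ b r + rowUsage D μ b s := by
  have hta : ε * b j ≤ r ⬝ᵥ b :=
    (mul_le_mul_of_nonneg_right hεr hbj.le).trans
      (single_le_sum (f := fun q => r q * b q) (fun q _ => mul_nonneg (hr q) (hb q)) (mem_univ j))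
  have hsqrt := Real.sqrt_sub_add_sqrt_add_lt (mul_pos hε hbj) hta hrs
  simp only [rowUsage, sub_dotProduct, add_dotProduct, single_dotProduct]
  nlinarith [mul_lt_mul_of_pos_left hsqrt hD]

end RowUsage

section Transfer

variable {ι κ : Type*} [DecidableEq ι]

def transfer (x : ι → κ → ℝ) (i k : ι) (d : κ → ℝ) : ι → κ → ℝ :=
  x + Pi.single k d - Pi.single i d

variable {x : ι → κ → ℝ} {i k : ι} (d : κ → ℝ)

theorem transfer_apply_left (hik : i ≠ k) : transfer x i k d i = x i - d := by
  simp [transfer, hik]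

theorem transfer_apply_right (hik : i ≠ k) : transfer x i k d k = x k + d := by
  simp [transfer, hik.symm]

theorem transfer_apply_of_ne {p : ι} (hpi : p ≠ i) (hpk : p ≠ k) : transfer x i k d p = x p := by
  simp [transfer, hpi, hpk]

theorem sum_transfer [Fintype ι] : ∑ p, transfer x i k d p = ∑ p, x p := by
  simp [transfer, sum_add_distrib, sum_sub_distrib, sum_pi_single']

end Transfer

variable {N K : ℕ} {V D : ℝ} {μ b m : Fin K → ℝ}

theorem clusterUCaC_transfer (x : Fin N → Fin K → ℝ) {i k : Fin N} (hik : i ≠ k) (d : Fin K → ℝ) :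
    clusterUCaC D μ b (transfer x i k d) + machineUsage D μ b x i + machineUsage D μ b x k =
      clusterUCaC D μ b x + rowUsage D μ b (x i - d) + rowUsage D μ b (x k + d) := by
  have hdiff := Fintype.sum_eq_add i k hik
    (f := fun p => machineUsage D μ b (transfer x i k d) p - machineUsage D μ b x p)
    fun p ⟨hpi, hpk⟩ => by simp [machineUsage_eq_rowUsage, transfer_apply_of_ne d hpi hpk]
  simp only [sum_sub_distrib, machineUsage_eq_rowUsage, transfer_apply_left d hik,
    transfer_apply_right d hik] at hdiff
  simp only [clusterUCaC, machineUsage_eq_rowUsage]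
  linarith

theorem exists_feasible_clusterUCaC_lt_of_slack (hD : 0 < D) (hμ : ∀ j, 0 ≤ μ j)
    (hb : ∀ j, 0 < b j) {x : Fin N → Fin K → ℝ} (hx : FeasibleAlloc V D μ b m x)
    {i k : Fin N} (hik : i ≠ k) (hi : x i ≠ 0) (hs : x i ⬝ᵥ b ≤ x k ⬝ᵥ b)
    (hk : machineUsage D μ b x k < V) :
    ∃ y : Fin N → Fin K → ℝ,
      FeasibleAlloc V D μ b m y ∧ clusterUCaC D μ b y < clusterUCaC D μ b x := by
  obtain ⟨hx0, hxV, hxm⟩ := hx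
  obtain ⟨j, hj⟩ := Function.ne_iff.1 hi
  have hxij : 0 < x i j := (hx0 i j).lt_of_ne' hj
  have hlim : Tendsto (fun ε => rowUsage D μ b (x k + Pi.single j ε)) (𝓝[>] 0)
      (𝓝 (machineUsage D μ b x k)) := by
    have hcont : Continuous fun ε => rowUsage D μ b (x k + Pi.single j ε) :=
      continuous_rowUsage.comp
        (continuous_const.add (continuous_single (A := fun _ : Fin K => ℝ) j))
    simpa [machineUsage_eq_rowUsage] using hcont.tendsto 0 |>.mono_left nhdsWithin_le_nhds
  obtain ⟨ε, hεmem, hεx, hεV⟩ := (eventually_mem_nhdsWithin.and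
    (((eventually_le_nhds hxij).filter_mono nhdsWithin_le_nhds).and
      (hlim.eventually_lt_const hk))).exists
  have hε : 0 < ε := hεmem
  have hrow : ∀ p, 0 ≤ transfer x i k (Pi.single j ε) p ∧
      rowUsage D μ b (transfer x i k (Pi.single j ε) p) ≤ V := by
    intro p
    rcases eq_or_ne p i with rfl | hpi
    · rw [transfer_apply_left _ hik]
      refine ⟨sub_nonneg.2 fun q => ?_, ?_⟩
      · rcases eq_or_ne q j with rfl | hq
        · simpa using hεx
        · simpa [hq] using hx0 p q
      · exact (rowUsage_mono hD.le hμ (fun q => (hb q).le)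
          (sub_le_self _ (Pi.single_nonneg.2 hε.le))).trans (hxV p)
    rcases eq_or_ne p k with rfl | hpk
    · rw [transfer_apply_right _ hik]
      exact ⟨add_nonneg (hx0 p) (Pi.single_nonneg.2 hε.le), hεV.le⟩
    · rw [transfer_apply_of_ne _ hpi hpk]
      exact ⟨hx0 p, hxV p⟩
  refine ⟨transfer x i k (Pi.single j ε),
    ⟨fun p => (hrow p).1, fun p => (hrow p).2, fun q => ?_⟩, ?_⟩
  · rw [← hxm q, ← Finset.sum_apply, sum_transfer, Finset.sum_apply]
  · have hcost := clusterUCaC_transfer (D := D) (μ := μ) (b := b) x hik (Pi.single j ε)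
    have hlt := rowUsage_sub_single_add_rowUsage_add_single_lt (μ := μ) hD (fun q => (hb q).le)
      (hx0 i) hs (hb j) hε hεx
    rw [machineUsage_eq_rowUsage, machineUsage_eq_rowUsage] at hcost
    linarith

theorem le_machineUsage_of_isMinOn (hD : 0 < D) (hμ : ∀ j, 0 ≤ μ j) (hb : ∀ j, 0 < b j)
    {x : Fin N → Fin K → ℝ} (hx : FeasibleAlloc V D μ b m x)
    (hopt : IsMinOn (clusterUCaC D μ b) {y | FeasibleAlloc V D μ b m y} x) {i k : Fin N}
    (hik : i ≠ k) (hi : x i ≠ 0) (hk : x k ≠ 0) (hiV : machineUsage D μ b x i < V) :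
    V ≤ machineUsage D μ b x k := by
  by_contra! hkV
  obtain ⟨y, hy, hlt⟩ := (le_total (x i ⬝ᵥ b) (x k ⬝ᵥ b)).elim
    (exists_feasible_clusterUCaC_lt_of_slack hD hμ hb hx hik hi · hkV)
    (exists_feasible_clusterUCaC_lt_of_slack hD hμ hb hx hik.symm hk · hiV)
  exact (isMinOn_iff.1 hopt y hy).not_gt hlt

theorem usedMachines_eq_card (x : Fin N → Fin K → ℝ) : usedMachines x = #{i | x i ≠ 0} := by
  rw [usedMachines, ← Set.ncard_coe_finset]
  congr
  ext i
  simp [Function.ne_iff]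

theorem clusterUCaC_eq_sum_used (x : Fin N → Fin K → ℝ) :
    clusterUCaC D μ b x = ∑ i with x i ≠ 0, machineUsage D μ b x i := by
  refine (sum_filter_of_ne fun i _ hi => ?_).symm
  exact fun hx0 => hi (by rw [machineUsage_eq_rowUsage, hx0, rowUsage_zero])

theorem clusterUCaC_le_usedMachines_mul {x : Fin N → Fin K → ℝ}
    (hx : FeasibleAlloc V D μ b m x) : clusterUCaC D μ b x ≤ usedMachines x * V := by
  rw [clusterUCaC_eq_sum_used, usedMachines_eq_card, ← nsmul_eq_mul]
  exact sum_le_card_nsmul _ _ _ fun i _ => hx.2.1 i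

theorem usedMachines_sub_one_mul_lt_clusterUCaC (hV : 0 < V) (hD : 0 < D) (hμ : ∀ j, 0 ≤ μ j)
    (hb : ∀ j, 0 < b j) {x : Fin N → Fin K → ℝ} (hx : FeasibleAlloc V D μ b m x)
    (hopt : IsMinOn (clusterUCaC D μ b) {y | FeasibleAlloc V D μ b m y} x) :
    (usedMachines x - 1) * V < clusterUCaC D μ b x := by
  rw [clusterUCaC_eq_sum_used, usedMachines_eq_card]
  set S : Finset (Fin N) := {i | x i ≠ 0}
  rcases S.eq_empty_or_nonempty with hS | hS
  · simp [hS, hV]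
  -- only the least loaded used machine can have slack
  obtain ⟨p, hpS, hpmin⟩ := S.exists_min_image (machineUsage D μ b x) hS
  have hfull : ∀ q ∈ S.erase p, V ≤ machineUsage D μ b x q := by
    intro q hq
    rcases le_or_gt V (machineUsage D μ b x p) with hpV | hpV
    · exact hpV.trans (hpmin q (mem_of_mem_erase hq))
    · exact le_machineUsage_of_isMinOn hD hμ hb hx hopt (ne_of_mem_erase hq).symm
        (mem_filter.1 hpS).2 (mem_filter.1 (mem_of_mem_erase hq)).2 hpV
  have hp : 0 < machineUsage D μ b x p :=
    rowUsage_pos hD hμ hb (hx.1 p) (mem_filter.1 hpS).2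
  calc ((#S : ℝ) - 1) * V = #(S.erase p) • V := by
        rw [card_erase_of_mem hpS, nsmul_eq_mul, Nat.cast_pred (card_pos.2 hS)]
    _ ≤ ∑ q ∈ S.erase p, machineUsage D μ b x q := card_nsmul_le_sum _ _ _ hfull
    _ < machineUsage D μ b x p + ∑ q ∈ S.erase p, machineUsage D μ b x q := by linarith
    _ = ∑ q ∈ S, machineUsage D μ b x q := add_sum_erase S _ hpS

end RelaxedSBPP

open RelaxedSBPP in
theorem relaxed_consistency_general (N K : ℕ) (V D : ℝ) (hV : 0 < V) (hD : 0 < D)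
    (μ b m : Fin K → ℝ) (hμ : ∀ j, 0 ≤ μ j) (hb : ∀ j, 0 < b j)
    (xstar : Fin N → Fin K → ℝ) (hxstar : FeasibleAlloc V D μ b m xstar)
    (hopt : ∀ x : Fin N → Fin K → ℝ, FeasibleAlloc V D μ b m x →
      clusterUCaC D μ b xstar ≤ clusterUCaC D μ b x) :
    ∀ x : Fin N → Fin K → ℝ, FeasibleAlloc V D μ b m x →
      usedMachines xstar ≤ usedMachines x := by
  intro x hx
  have hlt : ((usedMachines xstar : ℝ) - 1) * V < usedMachines x * V :=
    (usedMachines_sub_one_mul_lt_clusterUCaC hV hD hμ hb hxstar (isMinOn_iff.2 hopt)).trans_le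
      ((hopt x hx).trans (clusterUCaC_le_usedMachines_mul hx))
  have : (usedMachines xstar : ℝ) < usedMachines x + 1 := by
    linarith [lt_of_mul_lt_mul_right hlt hV.le]
  exact Nat.lt_add_one_iff.1 (by exact_mod_cast this)

/-- Relaxed consistency (Theorem 3): in the relaxed SBPP on empty machines, an allocation
minimizing the cluster UCaC among all feasible allocations uses the least number of
machines. -/
theorem relaxed_consistency (N K : ℕ) (V D : ℝ) (hV : 0 < V) (hD : 0 < D)
    (μ b m : Fin K → ℝ) (hμ : ∀ j, 0 ≤ μ j) (hb : ∀ j, 0 < b j) (hm : ∀ j, 0 ≤ m j)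
    (xstar : Fin N → Fin K → ℝ) (hxstar : FeasibleAlloc V D μ b m xstar)
    (hopt : ∀ x : Fin N → Fin K → ℝ, FeasibleAlloc V D μ b m x →
      clusterUCaC D μ b xstar ≤ clusterUCaC D μ b x) :
    ∀ x : Fin N → Fin K → ℝ, FeasibleAlloc V D μ b m x →
      usedMachines xstar ≤ usedMachines x :=
  relaxed_consistency_general N K V D hV hD μ b m hμ hb xstar hxstar hopt
end
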